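/- arXiv:math/0606470 — 2 statements merged into one kernel-verified Lean document; each statement's English description precedes it below -/
import Mathlib

section
/- Let h : ℝ^m → ℝ^m be a diffeomorphism and z ∈ ℝ^m. If C ⊆ ℝ^m is an open cone-like set of the form z + A·B, where A is an orthogonal transformation and B = {x : −s²·x_{k+1} < |x| < 1/s and s²|x_i| < |x| for k+1 < i ≤ m} for some s ≥ 1, then there exist t ≥ 1 and an orthogonal transformation A' such that h(z) + A'·B' ⊆ h(C), where B' is the set defined with parameter t in place of s. -/
/-!
Put `φ y = A⁻¹ (g (h z + A' y) - z)`; it suffices that `φ` maps `B_t` into `B_s`, and `φ` has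
derivative `N = A⁻¹ ∘ Dg(h z) ∘ A'` at `0`. The cone `B_s` is a conical neighbourhood of the
half-flat `{x | x_κ ≥ 0, x_i = 0 for i > κ}`, punctured at the vertex and cut off at radius `1/s`.
Taking `A'` from the Gram–Schmidt (QR) factorisation of `(A⁻¹ ∘ Dg(h z))⁻¹` makes `N` upper
triangular with nonnegative diagonal, so `N` preserves the half-flat. A point `y` of a thin cone
`B_t` is within `√m |y| / t²` of the half-flat and `φ y = N y + o(|y|)`, so for large `t` the
image of `B_t` stays within the fixed aperture of `B_s`.
-/

open Set Filter Function Submodule InnerProductSpace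

/-- The open cone `B^{k+1}_s = {x ∈ ℝ^m : -s² x_{k+1} < |x| < 1/s and
s²|x_i| < |x| for k+1 < i ≤ m}`; here the coordinate `x_{k+1}` is indexed by
`κ : Fin m` (0-based, `κ.val = k`). -/
def coneSet (m : ℕ) (κ : Fin m) (s : ℝ) : Set (EuclideanSpace ℝ (Fin m)) :=
  {x | -s ^ 2 * x κ < ‖x‖ ∧ ‖x‖ < 1 / s ∧
    ∀ i : Fin m, (κ : ℕ) < (i : ℕ) → s ^ 2 * |x i| < ‖x‖}

def halfFlat {ι : Type*} [LinearOrder ι] (κ : ι) : Set (EuclideanSpace ℝ ι) :=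
  {x | 0 ≤ x κ ∧ ∀ i, κ < i → x i = 0}

theorem EuclideanSpace.apply_eq_zero_of_mem_span_single {ι : Type*} [DecidableEq ι]
    {S : Set ι} {v : EuclideanSpace ℝ ι}
    (hv : v ∈ span ℝ ((EuclideanSpace.single · (1 : ℝ)) '' S)) {i : ι} (hi : i ∉ S) :
    v i = 0 := by
  induction hv using Submodule.span_induction with
  | mem x hx =>
    obtain ⟨j, hj, rfl⟩ := hx
    simp [(ne_of_mem_of_not_mem hj hi).symm]
  | zero => rfl
  | add x y _ _ hx hy => simp [hx, hy]
  | smul a x _ hx => simp [hx]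

theorem EuclideanSpace.norm_le_sqrt_card_mul {ι : Type*} [Fintype ι] {x : EuclideanSpace ℝ ι}
    {c : ℝ} (hc : 0 ≤ c) (hx : ∀ i, |x i| ≤ c) : ‖x‖ ≤ √(Fintype.card ι) * c := by
  rw [EuclideanSpace.norm_eq, ← Real.sqrt_sq hc, ← Real.sqrt_mul (Nat.cast_nonneg _)]
  gcongr
  calc ∑ i, ‖x i‖ ^ 2 ≤ ∑ _i : ι, c ^ 2 := by
        gcongr with i
        exact hx i
    _ = Fintype.card ι * c ^ 2 := by simp

section UpperTriangular

variable {ι : Type*} [Fintype ι] [LinearOrder ι] [DecidableEq ι]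

theorem mapsTo_halfFlat_of_upperTriangular (T : EuclideanSpace ℝ ι →ₗ[ℝ] EuclideanSpace ℝ ι)
    (hT : ∀ j i, j < i → T (EuclideanSpace.single j 1) i = 0)
    (hTdiag : ∀ j, 0 ≤ T (EuclideanSpace.single j 1) j) (κ : ι) :
    MapsTo T (halfFlat κ) (halfFlat κ) := by
  rintro x ⟨hxκ, hx⟩
  have hTx : ∀ i, T x i = ∑ j, x j * T (EuclideanSpace.single j 1) i := by
    intro i
    conv_lhs => rw [← (EuclideanSpace.basisFun ι ℝ).sum_repr x]
    simp
  refine ⟨?_, fun i hi => ?_⟩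
  · rw [hTx, Finset.sum_eq_single κ]
    · exact mul_nonneg hxκ (hTdiag κ)
    · intro j _ hj
      rcases hj.lt_or_gt with hj | hj
      · rw [hT j κ hj, mul_zero]
      · rw [hx j hj, zero_mul]
    · simp
  · rw [hTx]
    refine Finset.sum_eq_zero fun j _ => ?_
    rcases lt_or_ge j i with hj | hj
    · rw [hT j i hj, mul_zero]
    · rw [hx j (hi.trans_le hj), zero_mul]

variable [LocallyFiniteOrderBot ι]

/-- QR decomposition of `M⁻¹`: the Gram–Schmidt basis of the vectors `M⁻¹ eⱼ`. -/
theorem exists_orthonormalBasis_upperTriangular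
    (M : EuclideanSpace ℝ ι ≃ₗ[ℝ] EuclideanSpace ℝ ι) :
    ∃ b : OrthonormalBasis ι ℝ (EuclideanSpace ℝ ι),
      (∀ j i, j < i → M (b j) i = 0) ∧ ∀ j, 0 ≤ M (b j) j := by
  let f : ι → EuclideanSpace ℝ ι := fun j => M.symm (EuclideanSpace.single j 1)
  have hf : LinearIndependent ℝ f := by
    have hf' : f = M.symm ∘ EuclideanSpace.basisFun ι ℝ := funext fun j => by simp [f]
    rw [hf']
    exact (EuclideanSpace.basisFun ι ℝ).toBasis.linearIndependent.map' M.symm.toLinearMap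
      M.symm.ker
  have hMspan : ∀ S : Set ι, ∀ v ∈ span ℝ (f '' S),
      M v ∈ span ℝ ((EuclideanSpace.single · (1 : ℝ)) '' S) := by
    intro S v hv
    simpa [Submodule.map_span, Set.image_image, f] using
      Submodule.mem_map_of_mem (f := M.toLinearMap) hv
  have hb : ∀ j, gramSchmidtOrthonormalBasis finrank_euclideanSpace f j =
      ‖gramSchmidt ℝ f j‖⁻¹ • gramSchmidt ℝ f j := fun j =>
    gramSchmidtOrthonormalBasis_apply _ (by
      rw [← norm_ne_zero_iff, gramSchmidtNormed_unit_length j hf]; exact one_ne_zero)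
  refine ⟨gramSchmidtOrthonormalBasis finrank_euclideanSpace f, fun j i hji => ?_, fun j => ?_⟩
  · rw [hb, map_smul, PiLp.smul_apply, EuclideanSpace.apply_eq_zero_of_mem_span_single
      (hMspan _ _ (gramSchmidt_mem_span ℝ f le_rfl)) (by simpa using hji), smul_zero]
  · have hdiff : gramSchmidt ℝ f j - f j ∈ span ℝ (f '' Iio j) := by
      rw [← span_gramSchmidt_Iio ℝ f j, gramSchmidt_def ℝ f j, sub_sub_cancel_left]
      refine neg_mem (sum_mem fun i hi => ?_)
      rw [starProjection_singleton]
      exact smul_mem _ _ (subset_span (mem_image_of_mem _ (Finset.mem_Iio.1 hi)))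
    have hdiag : M (gramSchmidt ℝ f j) j = 1 := by
      have h0 := EuclideanSpace.apply_eq_zero_of_mem_span_single (hMspan _ _ hdiff) (lt_irrefl j)
      simpa [f, sub_eq_zero] using h0
    rw [hb, map_smul, PiLp.smul_apply, hdiag]
    positivity

theorem exists_linearIsometryEquiv_mapsTo_halfFlat
    (M : EuclideanSpace ℝ ι ≃ₗ[ℝ] EuclideanSpace ℝ ι) (κ : ι) :
    ∃ A' : EuclideanSpace ℝ ι ≃ₗᵢ[ℝ] EuclideanSpace ℝ ι,
      MapsTo (M ∘ A') (halfFlat κ) (halfFlat κ) := by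
  obtain ⟨b, hb, hbdiag⟩ := exists_orthonormalBasis_upperTriangular M
  exact ⟨b.repr.symm, mapsTo_halfFlat_of_upperTriangular
    (M.toLinearMap ∘ₗ b.repr.symm.toLinearEquiv.toLinearMap)
    (by simpa [b.repr_symm_single] using hb) (by simpa [b.repr_symm_single] using hbdiag) κ⟩

end UpperTriangular

section Cone

variable {m : ℕ} {κ : Fin m}

theorem mem_coneSet_of_norm_sub_lt {s : ℝ} {x q : EuclideanSpace ℝ (Fin m)}
    (hq : q ∈ halfFlat κ) (hx : ‖x‖ < 1 / s) (hxq : s ^ 2 * ‖x - q‖ < ‖x‖) :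
    x ∈ coneSet m κ s := by
  have hcoord : ∀ i, |x i - q i| ≤ ‖x - q‖ := fun i => by
    simpa using PiLp.norm_apply_le (x - q) i
  refine ⟨?_, hx, fun i hi => ?_⟩
  · have : -x κ ≤ |x κ - q κ| := by linarith [neg_abs_le (x κ - q κ), hq.1]
    nlinarith [hcoord κ, sq_nonneg s]
  · have := hcoord i
    rw [hq.2 i hi, sub_zero] at this
    nlinarith [sq_nonneg s]

theorem exists_mem_halfFlat_norm_sub_le {t : ℝ} (ht : 0 < t) {y : EuclideanSpace ℝ (Fin m)}
    (hy : y ∈ coneSet m κ t) : ∃ p ∈ halfFlat κ, ‖y - p‖ ≤ √m * (‖y‖ / t ^ 2) := by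
  obtain ⟨hyκ, -, hyi⟩ := hy
  let p : EuclideanSpace ℝ (Fin m) :=
    WithLp.toLp 2 fun i => if κ < i then 0 else if i = κ then max (y κ) 0 else y i
  refine ⟨p, ⟨by simp [p], fun i hi => by simp [p, hi]⟩, ?_⟩
  simpa using EuclideanSpace.norm_le_sqrt_card_mul (x := y - p) (by positivity) fun i => by
    rw [le_div_iff₀ (by positivity)]
    rcases lt_trichotomy κ i with hi | rfl | hi
    · simpa [p, hi, mul_comm] using (hyi i hi).le
    · rcases le_total 0 (y κ) with h | h
      · simp [p, max_eq_left h]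
      · simp only [p, lt_irrefl, if_false, if_true, PiLp.sub_apply, max_eq_right h, sub_zero,
          abs_of_nonpos h]
        linarith
    · simp [p, hi.not_gt, hi.ne]

theorem mem_coneSet_of_norm_sub_apply_le
    {N : EuclideanSpace ℝ (Fin m) →L[ℝ] EuclideanSpace ℝ (Fin m)}
    (hN : MapsTo N (halfFlat κ) (halfFlat κ)) {C δ s t : ℝ} (hC : 0 < C)
    (hNlow : ∀ y, ‖y‖ ≤ C * ‖N y‖) (hδC : (s ^ 2 + 1) * δ = 1 / (4 * C)) (hs : 0 < s)
    (ht : 0 < t) (htN : s * (‖N‖ + δ) ≤ t) (htm : 4 * C * s ^ 2 * ‖N‖ * √m ≤ t ^ 2)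
    {x y : EuclideanSpace ℝ (Fin m)} (hy : y ∈ coneSet m κ t) (hxy : ‖x - N y‖ ≤ δ * ‖y‖) :
    x ∈ coneSet m κ s := by
  have hδ : 0 < δ :=
    pos_of_mul_pos_right (hδC ▸ by positivity : 0 < (s ^ 2 + 1) * δ) (by positivity)
  have hy0 : 0 < ‖y‖ := norm_pos_iff.2 fun h => by simpa [h] using hy.1
  obtain ⟨p, hp, hyp⟩ := exists_mem_halfFlat_norm_sub_le ht hy
  have hNy : ‖N y‖ ≤ ‖N‖ * ‖y‖ := N.le_opNorm y
  have hNyp : ‖N y - N p‖ ≤ ‖N‖ * (√m * (‖y‖ / t ^ 2)) := by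
    rw [← map_sub]
    exact (N.le_opNorm _).trans (by gcongr)
  have hsN : s ^ 2 * (‖N‖ * (√m * (‖y‖ / t ^ 2))) ≤ ‖y‖ / (4 * C) := by
    rw [le_div_iff₀ (by positivity)]
    calc s ^ 2 * (‖N‖ * (√m * (‖y‖ / t ^ 2))) * (4 * C)
        = 4 * C * s ^ 2 * ‖N‖ * √m * ‖y‖ / t ^ 2 := by ring
      _ ≤ t ^ 2 * ‖y‖ / t ^ 2 := by gcongr
      _ = ‖y‖ := by field_simp
  have hxNp : ‖x - N p‖ ≤ δ * ‖y‖ + ‖N‖ * (√m * (‖y‖ / t ^ 2)) :=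
    (norm_sub_le_norm_sub_add_norm_sub _ (N y) _).trans (add_le_add hxy hNyp)
  have hx : ‖y‖ / C - δ * ‖y‖ ≤ ‖x‖ := by
    have : ‖y‖ / C ≤ ‖N y‖ := by rw [div_le_iff₀ hC]; linarith [hNlow y]
    linarith [norm_sub_norm_le (N y) x, norm_sub_rev (N y) x]
  refine mem_coneSet_of_norm_sub_lt (hN hp) ?_ ?_
  · calc ‖x‖ ≤ ‖N y‖ + ‖x - N y‖ := norm_le_norm_add_norm_sub' _ _
      _ ≤ (‖N‖ + δ) * ‖y‖ := by linarith
      _ < (‖N‖ + δ) * (1 / t) := by gcongr; exact hy.2.1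
      _ ≤ 1 / s := by rw [mul_one_div, div_le_div_iff₀ ht hs]; linarith
  · calc s ^ 2 * ‖x - N p‖ ≤ s ^ 2 * (δ * ‖y‖ + ‖N‖ * (√m * (‖y‖ / t ^ 2))) := by gcongr
      _ ≤ (s ^ 2 + 1) * δ * ‖y‖ - δ * ‖y‖ + ‖y‖ / (4 * C) := by linarith
      _ = ‖y‖ / (2 * C) - δ * ‖y‖ := by rw [hδC]; ring
      _ < ‖y‖ / C - δ * ‖y‖ := by gcongr; linarith
      _ ≤ ‖x‖ := hx

theorem exists_mapsTo_coneSet {φ : EuclideanSpace ℝ (Fin m) → EuclideanSpace ℝ (Fin m)}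
    {N : EuclideanSpace ℝ (Fin m) ≃L[ℝ] EuclideanSpace ℝ (Fin m)}
    (hφ : HasFDerivAt φ (N : EuclideanSpace ℝ (Fin m) →L[ℝ] EuclideanSpace ℝ (Fin m)) 0)
    (hφ0 : φ 0 = 0) (hN : MapsTo N (halfFlat κ) (halfFlat κ)) {s : ℝ} (hs : 0 < s) :
    ∃ t, 1 ≤ t ∧ MapsTo φ (coneSet m κ t) (coneSet m κ s) := by
  obtain ⟨C, hC, hNC⟩ := N.symm.toContinuousLinearMap.bound
  obtain ⟨δ, hδ, hδC⟩ : ∃ δ > 0, (s ^ 2 + 1) * δ = 1 / (4 * C) :=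
    ⟨1 / (4 * C * (s ^ 2 + 1)), by positivity, by field_simp⟩
  obtain ⟨r, hr, hφr⟩ : ∃ r > 0, ∀ y, ‖y‖ < r → ‖φ y - N y‖ ≤ δ * ‖y‖ := by
    obtain ⟨r, hr, h⟩ :=
      Metric.eventually_nhds_iff.1 ((hasFDerivAt_iff_isLittleO_nhds_zero.1 hφ).def hδ)
    exact ⟨r, hr, fun y hy => by simpa [hφ0] using h (by simpa using hy)⟩
  obtain ⟨t, ht1, htN, htr, htm⟩ : ∃ t : ℝ, 1 ≤ t ∧ s * (‖N.toContinuousLinearMap‖ + δ) ≤ t ∧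
      r⁻¹ ≤ t ∧ 4 * C * s ^ 2 * ‖N.toContinuousLinearMap‖ * √m ≤ t ^ 2 :=
    ((eventually_ge_atTop 1).and <| (eventually_ge_atTop _).and <| (eventually_ge_atTop _).and <|
      (tendsto_pow_atTop two_ne_zero).eventually_ge_atTop _).exists
  have ht0 : 0 < t := one_pos.trans_le ht1
  refine ⟨t, ht1, fun y hy => mem_coneSet_of_norm_sub_apply_le hN hC
    (fun y => by simpa using hNC (N y)) hδC hs ht0 htN htm hy (hφr y ?_)⟩
  exact hy.2.1.trans_le (by rw [one_div]; exact inv_le_of_inv_le₀ hr htr)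

end Cone

theorem exists_hasFDerivAt_continuousLinearEquiv_of_inverse {𝕜 E F : Type*}
    [NontriviallyNormedField 𝕜] [NormedAddCommGroup E] [NormedSpace 𝕜 E]
    [NormedAddCommGroup F] [NormedSpace 𝕜 F] {h : E → F} {g : F → E}
    (hgh : LeftInverse g h) (hhg : RightInverse g h) {z : E}
    (hh : DifferentiableAt 𝕜 h z) (hg : DifferentiableAt 𝕜 g (h z)) :
    ∃ L : F ≃L[𝕜] E, HasFDerivAt g (L : F →L[𝕜] E) (h z) := by
  have hh' : DifferentiableAt 𝕜 h (g (h z)) := by rwa [hgh z]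
  have hleft : (fderiv 𝕜 g (h z)).comp (fderiv 𝕜 h z) = .id 𝕜 E := by
    have := hg.hasFDerivAt.comp z hh.hasFDerivAt
    rw [hgh.comp_eq_id] at this
    exact this.unique (hasFDerivAt_id z)
  have hright : (fderiv 𝕜 h z).comp (fderiv 𝕜 g (h z)) = .id 𝕜 F := by
    have := hh'.hasFDerivAt.comp (h z) hg.hasFDerivAt
    rw [hhg.comp_eq_id, hgh z] at this
    exact this.unique (hasFDerivAt_id (h z))
  exact ⟨.equivOfInverse _ _ (fun x => congr($hright x)) (fun x => congr($hleft x)),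
    hg.hasFDerivAt⟩

/-- The image under a diffeomorphism `h` of a cone of type `z + A·B^{k+1}_s`
contains a (possibly thinner and shorter) cone of the same type with vertex
`h z`. -/
theorem diffeo_image_contains_cone (m : ℕ) (κ : Fin m)
    (h g : EuclideanSpace ℝ (Fin m) → EuclideanSpace ℝ (Fin m))
    (hinv : ∀ a, g (h a) = a) (hinv' : ∀ a, h (g a) = a)
    (hdiff : Differentiable ℝ h) (gdiff : Differentiable ℝ g)
    (z : EuclideanSpace ℝ (Fin m)) (s : ℝ) (hs : 1 ≤ s)
    (A : EuclideanSpace ℝ (Fin m) ≃ₗᵢ[ℝ] EuclideanSpace ℝ (Fin m)) :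
    ∃ t : ℝ, 1 ≤ t ∧
      ∃ A' : EuclideanSpace ℝ (Fin m) ≃ₗᵢ[ℝ] EuclideanSpace ℝ (Fin m),
        (fun w => h z + A' w) '' coneSet m κ t ⊆
          h '' ((fun w => z + A w) '' coneSet m κ s) := by
  obtain ⟨L, hL⟩ :=
    exists_hasFDerivAt_continuousLinearEquiv_of_inverse hinv hinv' (hdiff z) (gdiff (h z))
  let M := L.trans A.symm.toContinuousLinearEquiv
  obtain ⟨A', hA'⟩ := exists_linearIsometryEquiv_mapsTo_halfFlat M.toLinearEquiv κ
  let φ := fun y => A.symm (g (h z + A' y) - z)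
  have hφ : HasFDerivAt φ (A'.toContinuousLinearEquiv.trans M :
      EuclideanSpace ℝ (Fin m) →L[ℝ] EuclideanSpace ℝ (Fin m)) 0 := by
    have hL' : HasFDerivAt g (L : EuclideanSpace ℝ (Fin m) →L[ℝ] _) (h z + A' 0) := by
      simpa using hL
    exact A.symm.hasFDerivAt.comp 0 ((hL'.comp 0 (A'.hasFDerivAt.const_add (h z))).sub_const z)
  obtain ⟨t, ht, hφt⟩ := exists_mapsTo_coneSet hφ (by simp [φ, hinv]) hA' (by linarith)
  refine ⟨t, ht, A', ?_⟩
  rintro _ ⟨y, hy, rfl⟩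
  exact ⟨z + A (φ y), ⟨φ y, hφt hy, rfl⟩, by simp [φ, hinv']⟩
end

section
/- Let {h^t}_{t∈ℝ} be a one-parameter group of diffeomorphisms of ℝ (i.e., h^{s+t} = h^s ∘ h^t and h^0 = id) depending continuously on t (jointly continuous ℝ × ℝ → ℝ). Then for each fixed x, the map t ↦ h^t(x) is differentiable in t. -/
open Set Filter

/-- A one-parameter group of diffeomorphisms of `ℝ` depending (jointly)
continuously on the parameter depends differentiably on the parameter. -/
theorem oneParameterGroup_differentiable_in_t
    (h : ℝ → ℝ → ℝ)
    (hdiffeo : ∀ t : ℝ, ∃ g : ℝ → ℝ, (∀ x, g (h t x) = x) ∧ (∀ x, h t (g x) = x) ∧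
      Differentiable ℝ (h t) ∧ Differentiable ℝ g)
    (hgroup : ∀ s t x : ℝ, h (s + t) x = h s (h t x))
    (hzero : ∀ x : ℝ, h 0 x = x)
    (hcont : Continuous fun p : ℝ × ℝ => h p.1 p.2) :
    ∀ x : ℝ, Differentiable ℝ fun t => h t x := by
  -- each `h t` is injective
  have hinj : ∀ t : ℝ, Function.Injective (h t) := by
    intro t
    obtain ⟨g, hg1, -, -, -⟩ := hdiffeo t
    exact Function.LeftInverse.injective hg1
  have hdiff : ∀ t : ℝ, Differentiable ℝ (h t) := fun t => (hdiffeo t).choose_spec.2.2.1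
  -- `h (-t)` inverts `h t`
  have hinv : ∀ t x : ℝ, h (-t) (h t x) = x := by
    intro t x
    rw [← hgroup, neg_add_cancel, hzero]
  -- each `h t` is strictly monotone (increasing)
  have hpos : ∀ t : ℝ, h t 0 < h t 1 := by
    intro t
    by_contra hle
    push_neg at hle
    have hne : ∀ s : ℝ, h s 1 - h s 0 ≠ 0 := by
      intro s hs
      have : h s 1 = h s 0 := by linarith [sub_eq_zero.mp hs]
      exact one_ne_zero (hinj s this)
    have hcont' : Continuous fun s : ℝ => h s 1 - h s 0 := by
      exact (hcont.comp (continuous_id.prodMk continuous_const)).sub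
        (hcont.comp (continuous_id.prodMk continuous_const))
    have h0 : (0:ℝ) ∈ uIcc (h 0 1 - h 0 0) (h t 1 - h t 0) := by
      rw [hzero, hzero]
      constructor
      · simp only [inf_le_iff]
        right; linarith
      · simp only [le_sup_iff]
        left; norm_num
    obtain ⟨c, -, hc⟩ := intermediate_value_uIcc (a := (0:ℝ)) (b := t)
      hcont'.continuousOn h0
    exact hne c hc
  have hmono : ∀ t : ℝ, StrictMono (h t) := by
    intro t
    rcases ((hdiff t).continuous).strictMono_of_inj (hinj t) with hm | ha
    · exact hm
    · exact absurd (hpos t) (not_lt.mpr (ha zero_lt_one).le)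
  intro x
  -- the orbit map
  set φ : ℝ → ℝ := fun t => h t x with hφ
  have hφc : Continuous φ := hcont.comp (continuous_id.prodMk continuous_const)
  by_cases hfix : ∀ t : ℝ, h t x = x
  · have : φ = fun _ => x := funext hfix
    rw [hφ] at this ⊢
    rw [this]
    exact differentiable_const x
  -- the stabilizer subgroup
  push_neg at hfix
  obtain ⟨t₀, ht₀⟩ := hfix
  set S : AddSubgroup ℝ :=
    { carrier := {t : ℝ | h t x = x}
      zero_mem' := hzero x
      add_mem' := by
        intro a b ha hb
        simp only [Set.mem_setOf_eq] at *
        rw [hgroup, hb, ha]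
      neg_mem' := by
        intro a ha
        simp only [Set.mem_setOf_eq] at *
        rw [← ha, hinv, ha] } with hS
  -- halving: if `a ∈ S` then `a/2 ∈ S`
  have hhalf : ∀ a : ℝ, a ∈ S → a / 2 ∈ S := by
    intro a ha
    have key : h a x = h (a/2) (h (a/2) x) := by
      rw [← hgroup]; norm_num
    have ha' : h a x = x := ha
    rcases lt_trichotomy (h (a/2) x) x with hlt | heq | hgt
    · have := hmono (a/2) hlt
      rw [← key, ha'] at this
      exact absurd (this.trans hlt) (lt_irrefl x)
    · exact heq
    · have := hmono (a/2) hgt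
      rw [← key, ha'] at this
      exact absurd (hgt.trans this) (lt_irrefl x)
  -- the stabilizer is trivial
  have hS0 : ∀ a : ℝ, a ∈ S → a = 0 := by
    intro a ha
    by_contra hne
    -- wlog a > 0
    have habs : |a| ∈ S := by
      rcases abs_choice a with hc | hc
      · rwa [hc]
      · rw [hc]; exact S.neg_mem ha
    have hapos : 0 < |a| := abs_pos.mpr hne
    -- S is dense
    have hdense : Dense (S : Set ℝ) := by
      apply S.dense_of_not_isolated_zero
      intro ε hε
      obtain ⟨n, hn⟩ := pow_unbounded_of_one_lt (|a| / ε) (one_lt_two (α := ℝ))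
      refine ⟨|a| / 2 ^ n, ?_, ?_, ?_⟩
      · -- |a| / 2^n ∈ S by repeated halving
        clear hn
        induction n with
        | zero => simpa using habs
        | succ k ih =>
          have e : |a| / 2 ^ (k+1) = |a| / 2 ^ k / 2 := by
            rw [div_div, pow_succ]
          rw [e]
          exact hhalf _ ih
      · positivity
      · rw [div_lt_iff₀ (by positivity)]
        rw [div_lt_iff₀ hε] at hn
        linarith [hn]
    -- S is closed
    have hclosed : IsClosed (S : Set ℝ) := by
      have : (S : Set ℝ) = φ ⁻¹' {x} := rfl
      rw [this]
      exact isClosed_singleton.preimage hφc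
    have : (S : Set ℝ) = Set.univ := hclosed.closure_eq ▸ hdense.closure_eq
    have ht₀' : t₀ ∈ (S : Set ℝ) := this ▸ Set.mem_univ t₀
    exact ht₀ ht₀'
  -- φ is injective
  have hφinj : Function.Injective φ := by
    intro s t hst
    have hst' : h s x = h t x := hst
    have : h (s - t) x = x := by
      rw [sub_eq_add_neg, add_comm, hgroup, hst']
      exact hinv t x
    have := hS0 _ this
    linarith [sub_eq_zero.mp this]
  -- φ is strictly monotone or antitone, hence differentiable a.e.
  have hexists : ∃ t₁ : ℝ, DifferentiableAt ℝ φ t₁ := by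
    rcases hφc.strictMono_of_inj hφinj with hm | ha
    · exact hm.monotone.ae_differentiableAt.exists
    · have : Monotone fun t => -φ t := fun u v huv => neg_le_neg (ha.antitone huv)
      obtain ⟨t₁, ht₁⟩ := this.ae_differentiableAt.exists
      exact ⟨t₁, by simpa using ht₁.neg⟩
  obtain ⟨t₁, ht₁⟩ := hexists
  -- propagate differentiability to every point
  intro t
  have key : φ = fun u => h (t - t₁) (φ (u - (t - t₁))) := by
    funext u
    rw [hφ]
    simp only
    rw [← hgroup]
    congr 1
    ring
  show DifferentiableAt ℝ φ t
  rw [key]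
  have h1 : DifferentiableAt ℝ (fun u : ℝ => φ (u - (t - t₁))) t := by
    have h2 : DifferentiableAt ℝ φ (t - (t - t₁)) := by
      simpa using ht₁
    exact h2.comp t ((differentiable_id.sub_const (t - t₁)) t)
  exact (hdiff (t - t₁) _).comp t h1
end
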